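/- Let α ∈ {+1, −1}, and let A and A + α Z Zᵀ be n×n real symmetric positive definite matrices, where Z is n×k. Let V = A⁻¹ Z (I_k + α Zᵀ A⁻¹ Z)^{−1/2}. Suppose C is an n×n symmetric positive semidefinite matrix satisfying A^{−1/2} C + C A^{−1/2} − α C² = V Vᵀ and such that A^{−1/2} − α C is positive definite. Then A^{−1/2} − α C = (A + α Z Zᵀ)^{−1/2}. -/

import Mathlib

/-!
Put `X = A^{-1/2} - α C`. Expanding `X²` and substituting the Riccati equation gives
`X² = A⁻¹ - α V Vᵀ = A⁻¹ - α A⁻¹ Z (I + α Zᵀ A⁻¹ Z)⁻¹ Zᵀ A⁻¹`, which is `(A + α Z Zᵀ)⁻¹` by the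
Woodbury identity. As `X` is positive definite, `X⁻¹` is a positive definite square root of
`A + α Z Zᵀ`, hence its principal one.
-/

open Matrix

open scoped ComplexOrder in
/-- The positive semidefinite square root of a positive semidefinite matrix
(the definition `Matrix.PosSemidef.sqrt` of the older Mathlib, since removed). -/
noncomputable def Matrix.PosSemidef.sqrt {n 𝕜 : Type*} [Fintype n] [DecidableEq n] [RCLike 𝕜]
    {A : Matrix n n 𝕜} (hA : A.PosSemidef) : Matrix n n 𝕜 :=
  hA.1.eigenvectorUnitary.1 * diagonal ((↑) ∘ Real.sqrt ∘ hA.1.eigenvalues) *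
  (star hA.1.eigenvectorUnitary : Matrix n n 𝕜)

namespace Matrix

/-- Unlike `Matrix.add_mul_mul_inv_eq_sub`, this form of the Woodbury identity does not ask `α`
to be invertible. -/
theorem inv_add_smul_mul {m n R : Type*} [Fintype m] [DecidableEq m] [Fintype n] [DecidableEq n]
    [CommRing R] {A : Matrix n n R} (U : Matrix n m R) (V : Matrix m n R) (α : R)
    (hA : IsUnit A) (hM : IsUnit (1 + α • (V * A⁻¹ * U))) :
    (A + α • (U * V))⁻¹ = A⁻¹ - α • (A⁻¹ * U * (1 + α • (V * A⁻¹ * U))⁻¹ * V * A⁻¹) := by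
  set M := 1 + α • (V * A⁻¹ * U) with hM_def
  have hA_det : IsUnit A.det := (isUnit_iff_isUnit_det A).mp hA
  have hM_sub : α • (V * A⁻¹ * U) * M⁻¹ = 1 - M⁻¹ := by
    rw [← add_sub_cancel_left 1 (α • (V * A⁻¹ * U)), ← hM_def, Matrix.sub_mul, Matrix.one_mul,
      mul_nonsing_inv M ((isUnit_iff_isUnit_det M).mp hM)]
  apply inv_eq_right_inv
  calc (A + α • (U * V)) * (A⁻¹ - α • (A⁻¹ * U * M⁻¹ * V * A⁻¹))
      = A * A⁻¹ - α • (U * M⁻¹ * V * A⁻¹) + α • (U * V * A⁻¹)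
          - α • (U * (α • (V * A⁻¹ * U) * M⁻¹) * V * A⁻¹) := by
        simp only [add_mul, mul_sub, Matrix.smul_mul, Matrix.mul_smul, Matrix.mul_assoc, smul_smul,
          mul_nonsing_inv_cancel_left A _ hA_det]
        abel
    _ = 1 := by
        rw [mul_nonsing_inv A hA_det, hM_sub, Matrix.mul_sub, Matrix.sub_mul, Matrix.sub_mul,
          Matrix.mul_one, smul_sub]
        abel

theorem mul_inv_mul_transpose_mul_inv {m n R : Type*} [Fintype n] [DecidableEq n] [CommRing R]
    (P : Matrix m n R) {W : Matrix n n R} (hW : Wᵀ = W) :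
    P * W⁻¹ * (P * W⁻¹)ᵀ = P * (W * W)⁻¹ * Pᵀ := by
  rw [transpose_mul, transpose_nonsing_inv, hW, mul_inv_rev, Matrix.mul_assoc, Matrix.mul_assoc,
    Matrix.mul_assoc]

theorem sub_smul_mul_self {n R : Type*} [Fintype n] [DecidableEq n] [CommRing R]
    (X C : Matrix n n R) (α : R) :
    (X - α • C) * (X - α • C) = X * X - α • (X * C + C * X - α • C ^ 2) := by
  simp only [sub_mul, mul_sub, Matrix.smul_mul, Matrix.mul_smul, smul_smul, smul_sub, smul_add, sq]
  abel

section Sqrt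

open scoped ComplexOrder MatrixOrder

variable {n 𝕜 : Type*} [Fintype n] [DecidableEq n] [RCLike 𝕜]

theorem PosSemidef.sqrt_eq_cfcSqrt {A : Matrix n n 𝕜} (hA : A.PosSemidef) :
    hA.sqrt = CFC.sqrt A := by
  rw [CFC.sqrt_eq_cfc, cfc_nnreal_eq_real _ A, hA.1.cfc_eq, IsHermitian.cfc,
    Unitary.conjStarAlgAut_apply, PosSemidef.sqrt]
  congr 3
  funext i
  simp [max_eq_left (hA.eigenvalues_nonneg i)]

theorem PosSemidef.sqrt_mul_self {A : Matrix n n 𝕜} (hA : A.PosSemidef) :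
    hA.sqrt * hA.sqrt = A := by
  rw [hA.sqrt_eq_cfcSqrt]
  exact CFC.sqrt_mul_sqrt_self A hA.nonneg

theorem PosSemidef.posSemidef_sqrt {A : Matrix n n 𝕜} (hA : A.PosSemidef) :
    hA.sqrt.PosSemidef := by
  rw [hA.sqrt_eq_cfcSqrt]
  exact (CFC.sqrt_nonneg A).posSemidef

theorem PosSemidef.eq_sqrt_of_sq_eq {A B : Matrix n n 𝕜} (hA : A.PosSemidef)
    (hB : B.PosSemidef) (hAB : A ^ 2 = B) : A = hB.sqrt := by
  rw [hB.sqrt_eq_cfcSqrt, ← hAB, CFC.sqrt_sq A hA.nonneg]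

theorem PosSemidef.inv_sqrt_mul_inv_sqrt {A : Matrix n n 𝕜} (hA : A.PosSemidef) :
    hA.sqrt⁻¹ * hA.sqrt⁻¹ = A⁻¹ := by
  rw [← mul_inv_rev, hA.sqrt_mul_self]

theorem PosDef.eq_inv_sqrt_of_mul_self_eq_inv {X B : Matrix n n 𝕜} (hX : X.PosDef)
    (hB : B.PosDef) (hXB : X * X = B⁻¹) : X = hB.posSemidef.sqrt⁻¹ := by
  have hX_inv_sq : X⁻¹ ^ 2 = B := by
    rw [sq, ← mul_inv_rev, hXB,
      nonsing_inv_nonsing_inv B ((isUnit_iff_isUnit_det B).mp hB.isUnit)]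
  rw [← hX.inv.posSemidef.eq_sqrt_of_sq_eq hB.posSemidef hX_inv_sq,
    nonsing_inv_nonsing_inv X ((isUnit_iff_isUnit_det X).mp hX.isUnit)]

end Sqrt

end Matrix

theorem riccati_solution_is_inv_sqrt_correction_general {n k : ℕ} (α : ℝ)
    (A : Matrix (Fin n) (Fin n) ℝ) (Z : Matrix (Fin n) (Fin k) ℝ)
    (hA : A.PosDef) (hB : (A + α • (Z * Zᵀ)).PosDef)
    (h : ((1 : Matrix (Fin k) (Fin k) ℝ) + α • (Zᵀ * A⁻¹ * Z)).PosDef)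
    (C : Matrix (Fin n) (Fin n) ℝ)
    (heq : (hA.posSemidef.sqrt)⁻¹ * C + C * (hA.posSemidef.sqrt)⁻¹ - α • C ^ 2 =
      (A⁻¹ * Z * (h.posSemidef.sqrt)⁻¹) * (A⁻¹ * Z * (h.posSemidef.sqrt)⁻¹)ᵀ)
    (hpos : ((hA.posSemidef.sqrt)⁻¹ - α • C).PosDef) :
    (hA.posSemidef.sqrt)⁻¹ - α • C = (hB.posSemidef.sqrt)⁻¹ := by
  have hA_inv_symm : A⁻¹ᵀ = A⁻¹ := (isHermitian_iff_isSymm.mp hA.inv.isHermitian).eq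
  have hW_symm : h.posSemidef.sqrtᵀ = h.posSemidef.sqrt :=
    (isHermitian_iff_isSymm.mp h.posSemidef.posSemidef_sqrt.isHermitian).eq
  have hV_mul_transpose : A⁻¹ * Z * (h.posSemidef.sqrt)⁻¹ * (A⁻¹ * Z * (h.posSemidef.sqrt)⁻¹)ᵀ
      = A⁻¹ * Z * (1 + α • (Zᵀ * A⁻¹ * Z))⁻¹ * Zᵀ * A⁻¹ := by
    rw [mul_inv_mul_transpose_mul_inv _ hW_symm, h.posSemidef.sqrt_mul_self, transpose_mul,
      hA_inv_symm]
    simp only [Matrix.mul_assoc]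
  refine hpos.eq_inv_sqrt_of_mul_self_eq_inv hB ?_
  rw [sub_smul_mul_self, heq, hV_mul_transpose, hA.posSemidef.inv_sqrt_mul_inv_sqrt,
    inv_add_smul_mul Z Zᵀ α hA.isUnit h.isUnit]

theorem riccati_solution_is_inv_sqrt_correction {n k : ℕ} (α : ℝ) (hα : α = 1 ∨ α = -1)
    (A : Matrix (Fin n) (Fin n) ℝ) (Z : Matrix (Fin n) (Fin k) ℝ)
    (hA : A.PosDef) (hB : (A + α • (Z * Zᵀ)).PosDef)
    (h : ((1 : Matrix (Fin k) (Fin k) ℝ) + α • (Zᵀ * A⁻¹ * Z)).PosDef)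
    (C : Matrix (Fin n) (Fin n) ℝ) (hC : C.PosSemidef)
    (heq : (hA.posSemidef.sqrt)⁻¹ * C + C * (hA.posSemidef.sqrt)⁻¹ - α • C ^ 2 =
      (A⁻¹ * Z * (h.posSemidef.sqrt)⁻¹) * (A⁻¹ * Z * (h.posSemidef.sqrt)⁻¹)ᵀ)
    (hpos : ((hA.posSemidef.sqrt)⁻¹ - α • C).PosDef) :
    (hA.posSemidef.sqrt)⁻¹ - α • C = (hB.posSemidef.sqrt)⁻¹ :=
  riccati_solution_is_inv_sqrt_correction_general α A Z hA hB h C heq hpos
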